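/- Let r = p/q ∈ R_{m,n} be nondegenerate with normalized coefficient vector and S = S(q,-p). If r̃ ∈ R_{m,n} is degenerate (its numerator and denominator have a common root, or both leading coefficients vanish), then √(2(m+n+1))·d(r,r̃)·κ(S) ≥ 1. -/

import Mathlib

noncomputable section
open Matrix Finset Polynomial

/-- Spectral (operator `ℓ² → ℓ²`) norm of a complex matrix. -/
def specNorm {α β : Type} [Fintype α] [Fintype β] [DecidableEq α] [DecidableEq β]
    (A : Matrix α β ℂ) : ℝ :=
  ‖(Matrix.toEuclideanLin A).toContinuousLinearMap‖

/-- Moore–Penrose pseudoinverse `A† = Aᴴ (A Aᴴ)⁻¹` of a full row rank matrix. -/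
def pinv {α β : Type} [Fintype α] [Fintype β] [DecidableEq α] [DecidableEq β]
    (A : Matrix α β ℂ) : Matrix β α ℂ :=
  Aᴴ * (A * Aᴴ)⁻¹

/-- Sylvester-like matrix `S = S(q,-p)` of size `(m+n+1) × (m+n+2)`: for `0 ≤ k ≤ m` the
`(j,k)` entry is `q_{j-k}`, and for `0 ≤ k ≤ n` the `(j, m+1+k)` entry is `-p_{j-k}`
(coefficients out of range being `0`). -/
def sylv (m n : ℕ) (p q : Polynomial ℂ) : Matrix (Fin (m + n + 1)) (Fin (m + n + 2)) ℂ :=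
  fun j k =>
    if (k : ℕ) ≤ m then
      (if (k : ℕ) ≤ (j : ℕ) then q.coeff ((j : ℕ) - (k : ℕ)) else 0)
    else
      (if (k : ℕ) - (m + 1) ≤ (j : ℕ) then -p.coeff ((j : ℕ) - ((k : ℕ) - (m + 1))) else 0)

/-- Spectral condition number `κ(S) = ‖S‖·‖S†‖` of the Sylvester-like matrix. -/
def condS (m n : ℕ) (p q : Polynomial ℂ) : ℝ :=
  specNorm (sylv m n p q) * specNorm (pinv (sylv m n p q))

/-- Squared Euclidean norm of the stacked coefficient vector of `p/q ∈ R_{m,n}`. -/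
def coeffNorm2 (m n : ℕ) (p q : Polynomial ℂ) : ℝ :=
  (∑ j ∈ Finset.range (m + 1), ‖p.coeff j‖ ^ 2)
    + (∑ j ∈ Finset.range (n + 1), ‖q.coeff j‖ ^ 2)

/-- Distance of the stacked coefficient vectors of `p/q` and of `a·(p̃/q̃)` (viewed in
`R_{m,n}`, i.e. in `ℂ^{m+n+2}`). -/
def coeffDist (m n : ℕ) (p q pt qt : Polynomial ℂ) (a : ℂ) : ℝ :=
  Real.sqrt ((∑ j ∈ Finset.range (m + 1), ‖p.coeff j - a * pt.coeff j‖ ^ 2)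
    + (∑ j ∈ Finset.range (n + 1), ‖q.coeff j - a * qt.coeff j‖ ^ 2))

/-!
The columns of `S = S(q,-p)` are the coefficient vectors of `X^k q` (`k ≤ m`) and `-X^k p`
(`k ≤ n`), so a row vector `w` with `w S = 0` is a functional on polynomials of degree `≤ m + n`
that kills every `q u - p v` with `deg u ≤ m`, `deg v ≤ n`. For coprime `p, q` with a nonzero
leading coefficient these products exhaust that space (Bézout with degree control), so `S` has
full row rank and `S S† = 1`. For the degenerate `r̃`, evaluation at a common root `z`, i.e.
`w = (z^j)_j`, or the top coefficient when the common root is at infinity, is a nonzero `w`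
with `w S̃ = 0`. Then `w (S - S̃) S† = w`, so `1 ≤ ‖S - S̃‖ ‖S†‖`. Each column of `S - S̃` is a
shifted copy of the coefficients of `q - q̃` or `p - p̃`, which bounds `‖S - S̃‖` by
`√(m+n+1) d(r,r̃)` through the Frobenius norm; and `‖S‖ ≥ 1/√2` because the columns `0` and
`m + 1` carry the coefficient vectors of `q` and `p`, whose squared norms add up to `1`.
-/

open scoped Matrix.Norms.L2Operator

namespace Matrix

variable {𝕜 m n : Type*} [RCLike 𝕜] [Fintype m] [Fintype n] [DecidableEq n]

lemma one_le_l2_opNorm_of_mulVec_eq_self {A : Matrix n n 𝕜} {v : n → 𝕜} (hv : v ≠ 0)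
    (hAv : A *ᵥ v = v) : 1 ≤ ‖A‖ := by
  have hpos : 0 < ‖WithLp.toLp 2 v‖ := norm_pos_iff.2 (by simpa using hv)
  have h := A.l2_opNorm_mulVec (WithLp.toLp 2 v)
  simp only [hAv] at h
  exact le_of_mul_le_mul_right (by simpa using h) hpos

lemma one_le_l2_opNorm_sub_mul_l2_opNorm [DecidableEq m] {A B : Matrix m n 𝕜} {R : Matrix n m 𝕜}
    (hAR : A * R = 1) {w : m → 𝕜} (hw : w ≠ 0) (hwB : w ᵥ* B = 0) : 1 ≤ ‖A - B‖ * ‖R‖ := by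
  have hfix : ((A - B) * R)ᴴ *ᵥ star w = star w := by
    rw [← star_vecMul, ← vecMul_vecMul, vecMul_sub, hwB, sub_zero, vecMul_vecMul, hAR,
      vecMul_one]
  calc 1 ≤ ‖((A - B) * R)ᴴ‖ := one_le_l2_opNorm_of_mulVec_eq_self (star_ne_zero.2 hw) hfix
    _ = ‖(A - B) * R‖ := l2_opNorm_conjTranspose _
    _ ≤ ‖A - B‖ * ‖R‖ := l2_opNorm_mul _ _

lemma l2_opNorm_le_sqrt_sum_sq (A : Matrix m n 𝕜) : ‖A‖ ≤ √(∑ i, ∑ j, ‖A i j‖ ^ 2) := by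
  rw [l2_opNorm_def]
  refine ContinuousLinearMap.opNorm_le_bound _ (Real.sqrt_nonneg _) fun x => ?_
  have hrow : ∀ i, ‖(A *ᵥ x) i‖ ^ 2 ≤ (∑ j, ‖A i j‖ ^ 2) * ∑ j, ‖x j‖ ^ 2 := fun i =>
    calc ‖(A *ᵥ x) i‖ ^ 2 ≤ (∑ j, ‖A i j‖ * ‖x j‖) ^ 2 := by
          gcongr
          exact (norm_sum_le _ _).trans_eq (by simp [norm_mul])
      _ ≤ (∑ j, ‖A i j‖ ^ 2) * ∑ j, ‖x j‖ ^ 2 := Finset.sum_mul_sq_le_sq_mul_sq _ _ _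
  simp only [LinearEquiv.trans_apply, LinearMap.coe_toContinuousLinearMap', toLpLin_apply,
    EuclideanSpace.norm_eq]
  rw [← Real.sqrt_mul (by positivity), Finset.sum_mul]
  exact Real.sqrt_le_sqrt (Finset.sum_le_sum fun i _ => hrow i)

lemma sum_sq_norm_le_l2_opNorm_sq (A : Matrix m n 𝕜) (j : n) :
    ∑ i, ‖A i j‖ ^ 2 ≤ ‖A‖ ^ 2 := by
  have h := A.l2_opNorm_mulVec (EuclideanSpace.single j 1)
  rw [PiLp.norm_single, norm_one, mul_one] at h
  have hcol : ‖(EuclideanSpace.equiv m 𝕜).symm (A *ᵥ EuclideanSpace.single j 1)‖ ^ 2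
      = ∑ i, ‖A i j‖ ^ 2 := by
    simp [EuclideanSpace.norm_sq_eq]
  rw [← hcol]
  gcongr

end Matrix

namespace Polynomial

section Semiring

variable {R : Type*} [Semiring R]

lemma coeff_eq_zero_of_natDegree_le_of_coeff_eq_zero {f : R[X]} {d i : ℕ} (hf : f.natDegree ≤ d)
    (hd : f.coeff d = 0) (hi : d ≤ i) : f.coeff i = 0 := by
  rcases hi.eq_or_lt with rfl | hi
  exacts [hd, coeff_eq_zero_of_natDegree_lt (hf.trans_lt hi)]

lemma sum_range_coeff_X_pow_mul {M : Type*} [AddCommMonoid M] (φ : R → M) (hφ : φ 0 = 0)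
    {f : R[X]} {d k N : ℕ} (hf : f.natDegree ≤ d) (hN : k + d < N) :
    ∑ j ∈ range N, φ ((X ^ k * f).coeff j) = ∑ i ∈ range (d + 1), φ (f.coeff i) := by
  have hdeg : (X ^ k * f).natDegree ≤ k + d :=
    natDegree_mul_le.trans (add_le_add (natDegree_X_pow_le k) hf)
  have hvanish : ∀ j ∈ range N, j ∉ range (k + (d + 1)) → φ ((X ^ k * f).coeff j) = 0 := by
    intro j _ hj
    rw [coeff_eq_zero_of_natDegree_lt (hdeg.trans_lt (by rw [mem_range] at hj; omega)), hφ]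
  rw [← sum_subset (range_subset_range.2 (by omega)) hvanish, sum_range_add, sum_eq_zero,
    zero_add]
  · simp [coeff_X_pow_mul']
  · intro j hj
    rw [coeff_X_pow_mul', if_neg (by simpa using hj), hφ]

end Semiring

lemma exists_mul_add_mul_eq_of_natDegree_le {K : Type*} [Field K] {s t : ℕ} {a b f x y : K[X]}
    (ha : a.natDegree ≤ s) (has : a.coeff s ≠ 0) (hb : b.natDegree ≤ t)
    (hf : f.natDegree ≤ s + t) (h : a * x + b * y = f) :
    ∃ x' y' : K[X], x'.natDegree ≤ t ∧ y'.natDegree ≤ s ∧ a * x' + b * y' = f := by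
  have ha0 : a ≠ 0 := fun h0 => has (by simp [h0])
  have hadeg : a.natDegree = s := le_antisymm ha (le_natDegree_of_ne_zero has)
  have heq : a * (x + b * (y / a)) + b * (y % a) = f := by
    linear_combination h + b * EuclideanDomain.div_add_mod y a
  have hy : (y % a).natDegree ≤ s :=
    natDegree_le_of_degree_le <|
      (degree_mod_lt y ha0).le.trans (degree_le_natDegree.trans (by exact_mod_cast ha))
  refine ⟨x + b * (y / a), y % a, ?_, hy, heq⟩
  set x' := x + b * (y / a)
  rcases eq_or_ne x' 0 with hx0 | hx0
  · simp [hx0]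
  have hprod : s + x'.natDegree ≤ s + t := by
    rw [← hadeg, ← natDegree_mul ha0 hx0, eq_sub_of_add_eq heq, hadeg]
    refine (natDegree_sub_le _ _).trans (max_le hf (natDegree_mul_le.trans ?_))
    omega
  omega

lemma exists_mul_sub_mul_eq_of_isCoprime {K : Type*} [Field K] {m n : ℕ} {p q f : K[X]}
    (hp : p.natDegree ≤ m) (hq : q.natDegree ≤ n) (hco : IsCoprime p q)
    (hlead : p.coeff m ≠ 0 ∨ q.coeff n ≠ 0) (hf : f.natDegree ≤ m + n) :
    ∃ u v : K[X], u.natDegree ≤ m ∧ v.natDegree ≤ n ∧ q * u - p * v = f := by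
  obtain ⟨a, b, hab⟩ := hco
  rcases hlead with hpm | hqn
  · obtain ⟨x, y, hx, hy, hxy⟩ := exists_mul_add_mul_eq_of_natDegree_le hp hpm hq hf
      (x := a * f) (y := b * f) (by linear_combination f * hab)
    exact ⟨y, -x, hy, by rwa [natDegree_neg], by linear_combination hxy⟩
  · obtain ⟨x, y, hx, hy, hxy⟩ := exists_mul_add_mul_eq_of_natDegree_le (f := f) hq hqn hp
      (by omega) (x := b * f) (y := a * f) (by linear_combination f * hab)
    exact ⟨x, -y, hx, by rwa [natDegree_neg], by linear_combination hxy⟩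

section CommSemiring

variable {R : Type*} [CommSemiring R]

lemma map_mul_eq_zero_of_natDegree_le {M : Type*} [AddCommMonoid M] [Module R M]
    (ℓ : R[X] →ₗ[R] M) {f u : R[X]} {d : ℕ} (hu : u.natDegree ≤ d)
    (h : ∀ k ≤ d, ℓ (X ^ k * f) = 0) : ℓ (u * f) = 0 := by
  rw [as_sum_range_C_mul_X_pow u, sum_mul, map_sum]
  refine sum_eq_zero fun k hk => ?_
  rw [mul_assoc, C_mul', map_smul, h k (by rw [mem_range] at hk; omega), smul_zero]

def coeffFunctional {N : ℕ} (w : Fin N → R) : R[X] →ₗ[R] R :=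
  ∑ j, w j • lcoeff R j

variable {N : ℕ}

lemma coeffFunctional_apply (w : Fin N → R) (f : R[X]) :
    coeffFunctional w f = ∑ j, w j * f.coeff j := by
  simp [coeffFunctional]

lemma coeffFunctional_X_pow (w : Fin N → R) (i : Fin N) :
    coeffFunctional w (X ^ (i : ℕ)) = w i := by
  simp [coeffFunctional_apply, coeff_X_pow, Fin.val_eq_val]

lemma coeffFunctional_single (i : Fin N) (f : R[X]) :
    coeffFunctional (Pi.single i 1) f = f.coeff i := by
  simp [coeffFunctional_apply, Pi.single_apply]

lemma coeffFunctional_pow_eq_eval (z : R) {f : R[X]} (hf : f.natDegree < N) :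
    coeffFunctional (fun j : Fin N => z ^ (j : ℕ)) f = f.eval z := by
  rw [coeffFunctional_apply, eval_eq_sum_range' hf,
    Fin.sum_univ_eq_sum_range (fun j => z ^ j * f.coeff j)]
  simp only [mul_comm]

end CommSemiring

end Polynomial

lemma specNorm_eq_l2_opNorm {α β : Type} [Fintype α] [Fintype β] [DecidableEq α] [DecidableEq β]
    (A : Matrix α β ℂ) : specNorm A = ‖A‖ := rfl

lemma coeffDist_one (m n : ℕ) (p q pt qt : ℂ[X]) :
    coeffDist m n p q pt qt 1 = √(coeffNorm2 m n (p - pt) (q - qt)) := by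
  simp [coeffDist, coeffNorm2]

def sylvCol (m : ℕ) (p q : ℂ[X]) (k : ℕ) : ℂ[X] :=
  if k ≤ m then X ^ k * q else -(X ^ (k - (m + 1)) * p)

section Sylvester

variable {m n : ℕ} {p q : ℂ[X]}

lemma sylv_apply (j : Fin (m + n + 1)) (k : Fin (m + n + 2)) :
    sylv m n p q j k = (sylvCol m p q k).coeff j := by
  unfold sylv sylvCol
  split_ifs <;> simp [coeff_X_pow_mul', *]

lemma sylv_sub (pt qt : ℂ[X]) :
    sylv m n p q - sylv m n pt qt = sylv m n (p - pt) (q - qt) := by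
  ext j k
  simp only [Matrix.sub_apply, sylv_apply, sylvCol]
  split_ifs <;> simp [mul_sub, sub_neg_eq_add, neg_add_eq_sub]

lemma natDegree_sylvCol_le (hp : p.natDegree ≤ m) (hq : q.natDegree ≤ n) (k : Fin (m + n + 2)) :
    (sylvCol m p q k).natDegree ≤ m + n := by
  have hk := k.2
  unfold sylvCol
  split_ifs with hkm
  · exact natDegree_mul_le.trans (by have := natDegree_X_pow_le (R := ℂ) k; omega)
  · rw [natDegree_neg]
    exact natDegree_mul_le.trans (by have := natDegree_X_pow_le (R := ℂ) (k - (m + 1)); omega)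

lemma vecMul_sylv_apply (w : Fin (m + n + 1) → ℂ) (k : Fin (m + n + 2)) :
    (w ᵥ* sylv m n p q) k = coeffFunctional w (sylvCol m p q k) := by
  simp [Matrix.vecMul, dotProduct, sylv_apply, coeffFunctional_apply]

lemma sum_sq_norm_sylv_col (hp : p.natDegree ≤ m) (hq : q.natDegree ≤ n) (k : Fin (m + n + 2)) :
    ∑ j, ‖sylv m n p q j k‖ ^ 2 = if (k : ℕ) ≤ m then ∑ i ∈ range (n + 1), ‖q.coeff i‖ ^ 2
      else ∑ i ∈ range (m + 1), ‖p.coeff i‖ ^ 2 := by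
  have hk := k.2
  simp only [sylv_apply]
  rw [Fin.sum_univ_eq_sum_range (fun j => ‖(sylvCol m p q k).coeff j‖ ^ 2)]
  unfold sylvCol
  split_ifs with hkm
  · exact sum_range_coeff_X_pow_mul (‖·‖ ^ 2) (by simp) hq (by omega)
  · simp only [coeff_neg, norm_neg]
    exact sum_range_coeff_X_pow_mul (‖·‖ ^ 2) (by simp) hp (by omega)

lemma sum_sq_norm_sylv (hp : p.natDegree ≤ m) (hq : q.natDegree ≤ n) :
    ∑ j, ∑ k, ‖sylv m n p q j k‖ ^ 2 = (m + 1) * ∑ i ∈ range (n + 1), ‖q.coeff i‖ ^ 2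
      + (n + 1) * ∑ i ∈ range (m + 1), ‖p.coeff i‖ ^ 2 := by
  rw [sum_comm]
  simp_rw [sum_sq_norm_sylv_col hp hq]
  rw [Fin.sum_univ_eq_sum_range (fun k => if k ≤ m then _ else _),
    show m + n + 2 = (m + 1) + (n + 1) by ring, sum_range_add,
    sum_ite_of_true fun k hk => by rw [mem_range] at hk; omega,
    sum_ite_of_false fun k _ => by omega]
  simp

lemma l2_opNorm_sylv_le (hp : p.natDegree ≤ m) (hq : q.natDegree ≤ n) :
    ‖sylv m n p q‖ ≤ √(m + n + 1) * √(coeffNorm2 m n p q) := by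
  rw [← Real.sqrt_mul (by positivity)]
  refine (Matrix.l2_opNorm_le_sqrt_sum_sq _).trans (Real.sqrt_le_sqrt ?_)
  rw [sum_sq_norm_sylv hp hq, coeffNorm2]
  have : (0 : ℝ) ≤ ∑ i ∈ range (m + 1), ‖p.coeff i‖ ^ 2 := by positivity
  have : (0 : ℝ) ≤ ∑ i ∈ range (n + 1), ‖q.coeff i‖ ^ 2 := by positivity
  nlinarith

lemma one_le_sqrt_two_mul_l2_opNorm_sylv (hp : p.natDegree ≤ m) (hq : q.natDegree ≤ n)
    (hnorm : coeffNorm2 m n p q = 1) : 1 ≤ √2 * ‖sylv m n p q‖ := by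
  have hqS := Matrix.sum_sq_norm_le_l2_opNorm_sq (sylv m n p q) 0
  have hpS := Matrix.sum_sq_norm_le_l2_opNorm_sq (sylv m n p q) ⟨m + 1, by omega⟩
  rw [sum_sq_norm_sylv_col hp hq, if_pos (by simp)] at hqS
  rw [sum_sq_norm_sylv_col hp hq, if_neg (by simp)] at hpS
  rw [coeffNorm2] at hnorm
  calc 1 ≤ √(2 * ‖sylv m n p q‖ ^ 2) := Real.one_le_sqrt.2 (by linarith)
    _ = √2 * ‖sylv m n p q‖ := by rw [Real.sqrt_mul zero_le_two, Real.sqrt_sq (norm_nonneg _)]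

lemma eq_zero_of_vecMul_sylv_eq_zero (hp : p.natDegree ≤ m) (hq : q.natDegree ≤ n)
    (hco : IsCoprime p q) (hlead : p.coeff m ≠ 0 ∨ q.coeff n ≠ 0) {w : Fin (m + n + 1) → ℂ}
    (hw : w ᵥ* sylv m n p q = 0) : w = 0 := by
  have hqw : ∀ k ≤ m, coeffFunctional w (X ^ k * q) = 0 := fun k hk => by
    simpa [vecMul_sylv_apply, sylvCol, hk] using congrFun hw ⟨k, by omega⟩
  have hpw : ∀ k ≤ n, coeffFunctional w (X ^ k * p) = 0 := fun k hk => by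
    simpa [vecMul_sylv_apply, sylvCol, show ¬m + 1 + k ≤ m by omega] using
      congrFun hw ⟨m + 1 + k, by omega⟩
  ext i
  obtain ⟨u, v, hu, hv, huv⟩ := exists_mul_sub_mul_eq_of_isCoprime hp hq hco hlead
    ((natDegree_X_pow_le (i : ℕ)).trans (Nat.lt_succ_iff.1 i.2))
  rw [Pi.zero_apply, ← coeffFunctional_X_pow w i, ← huv, map_sub, mul_comm q, mul_comm p,
    map_mul_eq_zero_of_natDegree_le _ hu hqw, map_mul_eq_zero_of_natDegree_le _ hv hpw, sub_zero]

open scoped ComplexOrder in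
lemma sylv_mul_pinv (hp : p.natDegree ≤ m) (hq : q.natDegree ≤ n) (hco : IsCoprime p q)
    (hlead : p.coeff m ≠ 0 ∨ q.coeff n ≠ 0) : sylv m n p q * pinv (sylv m n p q) = 1 := by
  have hinj : Function.Injective (sylv m n p q).vecMul := fun w w' h =>
    sub_eq_zero.1 <| eq_zero_of_vecMul_sylv_eq_zero hp hq hco hlead <| by
      rw [Matrix.sub_vecMul, sub_eq_zero]; exact h
  have hU := (Matrix.PosDef.mul_conjTranspose_self _ hinj).isUnit
  rw [pinv, ← Matrix.mul_assoc, Matrix.mul_nonsing_inv _ ((Matrix.isUnit_iff_isUnit_det _).1 hU)]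

lemma exists_vecMul_sylv_eq_zero (hp : p.natDegree ≤ m) (hq : q.natDegree ≤ n)
    (hdeg : (∃ z : ℂ, p.eval z = 0 ∧ q.eval z = 0) ∨ (p.coeff m = 0 ∧ q.coeff n = 0)) :
    ∃ w : Fin (m + n + 1) → ℂ, w ≠ 0 ∧ w ᵥ* sylv m n p q = 0 := by
  rcases hdeg with ⟨z, hpz, hqz⟩ | ⟨hpm, hqn⟩
  · refine ⟨fun j => z ^ (j : ℕ), fun h => by simpa using congrFun h 0, funext fun k => ?_⟩
    rw [vecMul_sylv_apply, coeffFunctional_pow_eq_eval z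
      (Nat.lt_succ_of_le (natDegree_sylvCol_le hp hq k))]
    unfold sylvCol
    split_ifs <;> simp [hpz, hqz]
  · refine ⟨Pi.single (Fin.last (m + n)) 1, by simp, funext fun k => ?_⟩
    have hk := k.2
    rw [vecMul_sylv_apply, coeffFunctional_single, Fin.val_last]
    unfold sylvCol
    split_ifs with hkm
    · rw [coeff_X_pow_mul', if_pos (by omega)]
      exact coeff_eq_zero_of_natDegree_le_of_coeff_eq_zero hq hqn (by omega)
    · rw [coeff_neg, coeff_X_pow_mul', if_pos (by omega),
        coeff_eq_zero_of_natDegree_le_of_coeff_eq_zero hp hpm (by omega), neg_zero, Pi.zero_apply]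

end Sylvester

theorem degenerate_perturbation_lower_bound_general (m n : ℕ) (p q pt qt : Polynomial ℂ)
    (hp : p.natDegree ≤ m) (hq : q.natDegree ≤ n)
    (hpt : pt.natDegree ≤ m) (hqt : qt.natDegree ≤ n)
    (hco : IsCoprime p q) (hlead : p.coeff m ≠ 0 ∨ q.coeff n ≠ 0)
    (hnorm : coeffNorm2 m n p q = 1)
    (hdeg : (∃ z : ℂ, pt.eval z = 0 ∧ qt.eval z = 0) ∨ (pt.coeff m = 0 ∧ qt.coeff n = 0)) :
    1 ≤ Real.sqrt (2 * (m + n + 1)) * coeffDist m n p q pt qt 1 * condS m n p q := by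
  obtain ⟨w, hw, hwS⟩ := exists_vecMul_sylv_eq_zero hpt hqt hdeg
  have hgap : 1 ≤ ‖sylv m n p q - sylv m n pt qt‖ * ‖pinv (sylv m n p q)‖ :=
    Matrix.one_le_l2_opNorm_sub_mul_l2_opNorm (sylv_mul_pinv hp hq hco hlead) hw hwS
  have hdiff : ‖sylv m n p q - sylv m n pt qt‖ ≤ √(m + n + 1) * coeffDist m n p q pt qt 1 := by
    rw [sylv_sub, coeffDist_one]
    exact l2_opNorm_sylv_le ((natDegree_sub_le_of_le hp hpt).trans_eq (max_self m))
      ((natDegree_sub_le_of_le hq hqt).trans_eq (max_self n))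
  calc 1 ≤ (√2 * ‖sylv m n p q‖) * (‖sylv m n p q - sylv m n pt qt‖ * ‖pinv (sylv m n p q)‖) :=
        one_le_mul_of_one_le_of_one_le (one_le_sqrt_two_mul_l2_opNorm_sylv hp hq hnorm) hgap
    _ ≤ (√2 * ‖sylv m n p q‖) * (√(m + n + 1) * coeffDist m n p q pt qt 1 *
          ‖pinv (sylv m n p q)‖) := by gcongr
    _ = √(2 * (m + n + 1)) * coeffDist m n p q pt qt 1 * condS m n p q := by
        rw [condS, specNorm_eq_l2_opNorm, specNorm_eq_l2_opNorm, Real.sqrt_mul zero_le_two]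
        ring

/-- if `r = p/q` is nondegenerate and normalized and `r̃ = p̃/q̃ ∈ R_{m,n}`
(normalized) is degenerate, then `√(2(m+n+1)) d(r,r̃) κ(S) ≥ 1`. -/
theorem degenerate_perturbation_lower_bound (m n : ℕ) (p q pt qt : Polynomial ℂ)
    (hp : p.natDegree ≤ m) (hq : q.natDegree ≤ n)
    (hpt : pt.natDegree ≤ m) (hqt : qt.natDegree ≤ n)
    (hco : IsCoprime p q) (hlead : p.coeff m ≠ 0 ∨ q.coeff n ≠ 0)
    (hnorm : coeffNorm2 m n p q = 1) (hnormt : coeffNorm2 m n pt qt = 1)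
    (hopt : ∀ a : ℂ, ‖a‖ = 1 →
      coeffDist m n p q pt qt 1 ≤ coeffDist m n p q pt qt a)
    (hdeg : (∃ z : ℂ, pt.eval z = 0 ∧ qt.eval z = 0) ∨ (pt.coeff m = 0 ∧ qt.coeff n = 0)) :
    1 ≤ Real.sqrt (2 * (m + n + 1)) * coeffDist m n p q pt qt 1 * condS m n p q :=
  degenerate_perturbation_lower_bound_general m n p q pt qt hp hq hpt hqt hco hlead hnorm hdeg
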